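/- Let F be a smooth real function on an interval with F' nowhere zero. Then φ(u,v) = [F(u) − F(v)] / (F'(u) F'(v)) is skew-symmetric and solves the one-dimensional classical Yang–Baxter equation φ(u,v)[∂_u φ(w,u) + ∂_v φ(w,v)] + φ(v,w)[∂_v φ(u,v) + ∂_w φ(u,w)] + φ(w,u)[∂_w φ(v,w) + ∂_u φ(v,u)] = 0. -/

import Mathlib

/-- Partial derivative with respect to the second argument. -/
noncomputable def D2 (f : ℝ → ℝ → ℝ) (a b : ℝ) : ℝ := deriv (fun y => f a y) b

/-- The one-dimensional CYBE expression. -/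
noncomputable def cybe1 (φ : ℝ → ℝ → ℝ) (u v w : ℝ) : ℝ :=
  φ u v * (D2 φ w u + D2 φ w v) + φ v w * (D2 φ u v + D2 φ u w) +
    φ w u * (D2 φ v w + D2 φ v u)

lemma D2_formula (I : Set ℝ) (hI : IsOpen I)
    (F : ℝ → ℝ) (hF : ContDiffOn ℝ (⊤ : ℕ∞) F I) (hF' : ∀ x ∈ I, deriv F x ≠ 0)
    (a b : ℝ) (ha : a ∈ I) (hb : b ∈ I) :
    D2 (fun u v => (F u - F v) / (deriv F u * deriv F v)) a b =
      (-(deriv F b) * (deriv F a * deriv F b) -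
        (F a - F b) * (deriv F a * deriv (deriv F) b)) / (deriv F a * deriv F b) ^ 2 := by
  have hFb : DifferentiableAt ℝ F b :=
    (hF.contDiffAt (hI.mem_nhds hb)).differentiableAt (by simp)
  have hF'diff : DifferentiableAt ℝ (deriv F) b :=
    ((hF.deriv_of_isOpen (m := 1) hI (by exact WithTop.coe_le_coe.mpr le_top)).contDiffAt (hI.mem_nhds hb)).differentiableAt one_ne_zero
  have hnum : DifferentiableAt ℝ (fun y => F a - F y) b :=
    (differentiableAt_const _).sub hFb
  have hden : DifferentiableAt ℝ (fun y => deriv F a * deriv F y) b := hF'diff.const_mul _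
  unfold D2
  rw [deriv_fun_div hnum hden (mul_ne_zero (hF' a ha) (hF' b hb)),
    deriv_const_mul _ hF'diff, deriv_const_sub]

/-- For `F` smooth on an open interval with nowhere-vanishing derivative,
`φ(u,v) = (F(u) − F(v))/(F'(u)F'(v))` is skew-symmetric and solves the
one-dimensional CYBE. -/
theorem r_matrix_from_function (I : Set ℝ) (hI : IsOpen I) (hconn : I.OrdConnected)
    (F : ℝ → ℝ) (hF : ContDiffOn ℝ (⊤ : ℕ∞) F I) (hF' : ∀ x ∈ I, deriv F x ≠ 0) :
    let φ : ℝ → ℝ → ℝ := fun u v => (F u - F v) / (deriv F u * deriv F v)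
    (∀ u ∈ I, ∀ v ∈ I, φ u v = -φ v u) ∧
      (∀ u ∈ I, ∀ v ∈ I, ∀ w ∈ I, cybe1 φ u v w = 0) := by
  intro φ
  constructor
  · intro u hu v hv
    show (F u - F v) / (deriv F u * deriv F v) = -((F v - F u) / (deriv F v * deriv F u))
    ring
  · intro u hu v hv w hw
    show cybe1 (fun u v => (F u - F v) / (deriv F u * deriv F v)) u v w = 0
    unfold cybe1
    rw [D2_formula I hI F hF hF' w u hw hu,
      D2_formula I hI F hF hF' w v hw hv,
      D2_formula I hI F hF hF' u v hu hv,
      D2_formula I hI F hF hF' u w hu hw,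
      D2_formula I hI F hF hF' v w hv hw,
      D2_formula I hI F hF hF' v u hv hu]
    simp only []
    have hu' := hF' u hu
    have hv' := hF' v hv
    have hw' := hF' w hw
    field_simp
    ring
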